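/- arXiv:1411.6614 — 2 statements merged into one kernel-verified Lean document; each statement's English description precedes it below -/
import Mathlib

section
/- Projection Lemma: Let ℋ be a finite-dimensional complex inner product space decomposed as ℋ = S ⊕ S⊥ for a subspace S, and let P be the orthogonal projection onto S. Let H₁ and H₂ be Hermitian operators on ℋ such that H₂ vanishes on S (H₂v = 0 for all v ∈ S) and ⟨v, H₂ v⟩ ≥ J‖v‖² for all v ∈ S⊥, where J > 2‖H₁‖ (operator norm). Then λ(H₁|_S) − ‖H₁‖²/(J − 2‖H₁‖) ≤ λ(H₁ + H₂) ≤ λ(H₁|_S), where λ(H₁|_S) denotes the minimum of ⟨v, H₁ v⟩ over unit vectors v ∈ S. -/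
/-
Write a unit vector as `v = x + y` with `x ∈ S`, `y ∈ Sᗮ`, and `t = ‖y‖`. Since `H₂` kills `S`
and is symmetric, `⟨v, H₂ v⟩ = ⟨y, H₂ y⟩ ≥ J t²`, while `⟨v, H₁ v⟩ ≥ λ(H₁|_S) ‖x‖² - 2‖H₁‖ t - ‖H₁‖ t²`
with `‖x‖² = 1 - t²` and `λ(H₁|_S) ≤ ‖H₁‖`. Altogether `⟨v, (H₁ + H₂) v⟩ ≥ λ(H₁|_S) + k t² - 2‖H₁‖ t`
with `k = J - 2‖H₁‖ > 0`, and completing the square bounds the last two terms by `-‖H₁‖²/k`.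
The upper bound holds because `H₁ + H₂` agrees with `H₁` on `S`.
-/

open scoped InnerProductSpace

/-- The infimum of the Rayleigh quotient `⟨v, T v⟩` of `T` over unit vectors belonging
to the set `S`.  For a self-adjoint operator and `S = univ` this is the smallest
eigenvalue (the ground-state energy `λ(T)`); for `S` a subspace it is `λ(T|_S)`. -/
noncomputable def rayleighMin {E : Type*} [NormedAddCommGroup E] [InnerProductSpace ℂ E]
    (T : E →L[ℂ] E) (S : Set E) : ℝ :=
  sInf { r | ∃ v ∈ S, ‖v‖ = 1 ∧ r = (⟪v, T v⟫_ℂ).re }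

lemma neg_sq_div_le_mul_sq_sub {k : ℝ} (hk : 0 < k) (a t : ℝ) :
    -(a ^ 2 / k) ≤ k * t ^ 2 - 2 * a * t := by
  rw [neg_le, le_div_iff₀ hk]
  nlinarith [sq_nonneg (k * t - a)]

section

variable {E : Type*} [NormedAddCommGroup E] [InnerProductSpace ℂ E]

lemma abs_re_inner_apply_le (T : E →L[ℂ] E) (x y : E) :
    |(⟪x, T y⟫_ℂ).re| ≤ ‖T‖ * ‖x‖ * ‖y‖ :=
  calc |(⟪x, T y⟫_ℂ).re| ≤ ‖x‖ * ‖T y‖ :=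
        (Complex.abs_re_le_norm _).trans (norm_inner_le_norm _ _)
    _ ≤ ‖x‖ * (‖T‖ * ‖y‖) := by gcongr; exact T.le_opNorm y
    _ = ‖T‖ * ‖x‖ * ‖y‖ := by ring

lemma re_inner_add_apply_add_ge (T : E →L[ℂ] E) (x y : E) :
    (⟪x, T x⟫_ℂ).re + (⟪y, T y⟫_ℂ).re - 2 * ‖T‖ * ‖x‖ * ‖y‖
      ≤ (⟪x + y, T (x + y)⟫_ℂ).re := by
  have hxy := (abs_le.1 (abs_re_inner_apply_le T x y)).1
  have hyx := (abs_le.1 (abs_re_inner_apply_le T y x)).1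
  simp only [map_add, inner_add_left, inner_add_right, Complex.add_re]
  linarith

lemma LinearMap.IsSymmetric.inner_add_apply_add_of_apply_eq_zero {T : E →ₗ[ℂ] E}
    (hT : T.IsSymmetric) {x : E} (hx : T x = 0) (y : E) :
    ⟪x + y, T (x + y)⟫_ℂ = ⟪y, T y⟫_ℂ := by
  have hxy : ⟪x, T y⟫_ℂ = 0 := by rw [← hT x y, hx, inner_zero_left]
  simp [hx, hxy]

lemma Submodule.exists_mem_norm_eq_one_of_ne_bot {S : Submodule ℂ E} (hS : S ≠ ⊥) :
    ∃ v ∈ S, ‖v‖ = 1 := by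
  obtain ⟨x, hxS, hx⟩ := S.exists_mem_ne_zero_of_ne_bot hS
  exact ⟨(‖x‖⁻¹ : ℂ) • x, S.smul_mem _ hxS, by simp [norm_smul, hx]⟩

lemma bddBelow_rayleigh (T : E →L[ℂ] E) (S : Set E) :
    BddBelow { r | ∃ v ∈ S, ‖v‖ = 1 ∧ r = (⟪v, T v⟫_ℂ).re } := by
  refine ⟨-‖T‖, ?_⟩
  rintro _ ⟨v, -, hv, rfl⟩
  simpa [hv] using (abs_le.1 (abs_re_inner_apply_le T v v)).1

lemma rayleighMin_le (T : E →L[ℂ] E) {S : Set E} {v : E} (hvS : v ∈ S) (hv : ‖v‖ = 1) :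
    rayleighMin T S ≤ (⟪v, T v⟫_ℂ).re :=
  csInf_le (bddBelow_rayleigh T S) ⟨v, hvS, hv, rfl⟩

lemma le_rayleighMin {T : E →L[ℂ] E} {S : Set E} {c : ℝ} (hS : ∃ v ∈ S, ‖v‖ = 1)
    (h : ∀ v ∈ S, ‖v‖ = 1 → c ≤ (⟪v, T v⟫_ℂ).re) : c ≤ rayleighMin T S := by
  obtain ⟨v, hvS, hv⟩ := hS
  refine le_csInf ⟨_, v, hvS, hv, rfl⟩ ?_
  rintro _ ⟨w, hwS, hw, rfl⟩
  exact h w hwS hw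

lemma rayleighMin_le_opNorm (T : E →L[ℂ] E) (S : Set E) : rayleighMin T S ≤ ‖T‖ := by
  by_cases hS : ∃ v ∈ S, ‖v‖ = 1
  · obtain ⟨v, hvS, hv⟩ := hS
    calc rayleighMin T S ≤ (⟪v, T v⟫_ℂ).re := rayleighMin_le T hvS hv
      _ ≤ ‖T‖ := by simpa [hv] using (abs_le.1 (abs_re_inner_apply_le T v v)).2
  · have hempty : { r | ∃ v ∈ S, ‖v‖ = 1 ∧ r = (⟪v, T v⟫_ℂ).re } = ∅ := by
      ext r
      simp only [Set.mem_ofPred_eq, Set.mem_empty_iff_false, iff_false]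
      rintro ⟨v, hvS, hv, -⟩
      exact hS ⟨v, hvS, hv⟩
    rw [rayleighMin, hempty, Real.sInf_empty]
    exact norm_nonneg T

lemma rayleighMin_mul_norm_sq_le (T : E →L[ℂ] E) (S : Submodule ℂ E) {x : E} (hx : x ∈ S) :
    rayleighMin T S * ‖x‖ ^ 2 ≤ (⟪x, T x⟫_ℂ).re := by
  rcases eq_or_ne x 0 with rfl | hx0
  · simp
  have hunit := rayleighMin_le T (S.smul_mem ((‖x‖⁻¹ : ℝ) : ℂ) hx) (by simp [norm_smul, hx0])
  rw [map_smul, inner_smul_left, inner_smul_right, Complex.conj_ofReal, ← mul_assoc,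
    ← Complex.ofReal_mul, Complex.re_ofReal_mul] at hunit
  calc rayleighMin T S * ‖x‖ ^ 2 ≤ ‖x‖⁻¹ * ‖x‖⁻¹ * (⟪x, T x⟫_ℂ).re * ‖x‖ ^ 2 := by gcongr
    _ = (⟪x, T x⟫_ℂ).re := by field_simp

lemma rayleighMin_sub_le_re_inner_add_apply {H₁ H₂ : E →L[ℂ] E}
    (hH₂ : (H₂ : E →ₗ[ℂ] E).IsSymmetric) {S : Submodule ℂ E} [S.HasOrthogonalProjection]
    (hvanish : ∀ v ∈ S, H₂ v = 0) {J : ℝ} (hJlower : ∀ v ∈ Sᗮ, J * ‖v‖ ^ 2 ≤ (⟪v, H₂ v⟫_ℂ).re)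
    (hJ : 2 * ‖H₁‖ < J) {v : E} (hv : ‖v‖ = 1) :
    rayleighMin H₁ S - ‖H₁‖ ^ 2 / (J - 2 * ‖H₁‖) ≤ (⟪v, (H₁ + H₂) v⟫_ℂ).re := by
  obtain ⟨x, hxS, y, hyS, rfl⟩ := S.exists_add_mem_mem_orthogonal v
  have hpyth : ‖x‖ ^ 2 + ‖y‖ ^ 2 = 1 := by
    rw [sq, sq, ← norm_add_sq_eq_norm_sq_add_norm_sq_of_inner_eq_zero x y
      (Submodule.inner_right_of_mem_orthogonal hxS hyS), hv, one_mul]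
  have hx1 : ‖x‖ ≤ 1 := by nlinarith [norm_nonneg x, norm_nonneg y]
  have hH₂xy : (⟪x + y, H₂ (x + y)⟫_ℂ).re = (⟪y, H₂ y⟫_ℂ).re := by
    simpa using congrArg Complex.re (hH₂.inner_add_apply_add_of_apply_eq_zero (hvanish x hxS) y)
  have hH₁xy := re_inner_add_apply_add_ge H₁ x y
  have hH₁x := rayleighMin_mul_norm_sq_le H₁ S hxS
  have hH₁y := (abs_le.1 (abs_re_inner_apply_le H₁ y y)).1
  have hmin := rayleighMin_le_opNorm H₁ S
  have hsq := neg_sq_div_le_mul_sq_sub (sub_pos.2 hJ) ‖H₁‖ ‖y‖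
  rw [add_apply, inner_add_right, Complex.add_re, hH₂xy]
  linarith [hJlower y hyS, congrArg (rayleighMin H₁ S * ·) hpyth,
    mul_le_mul_of_nonneg_right hmin (sq_nonneg ‖y‖),
    mul_le_mul_of_nonneg_right hx1 (mul_nonneg (norm_nonneg H₁) (norm_nonneg y))]

end

theorem projection_lemma_general {E : Type*} [NormedAddCommGroup E] [InnerProductSpace ℂ E]
    [FiniteDimensional ℂ E]
    (H₁ H₂ : E →L[ℂ] E) (hH₂ : IsSelfAdjoint H₂)
    (S : Submodule ℂ E) (hS : S ≠ ⊥)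
    (hvanish : ∀ v ∈ S, H₂ v = 0)
    (J : ℝ) (hJlower : ∀ v ∈ Sᗮ, J * ‖v‖ ^ 2 ≤ (⟪v, H₂ v⟫_ℂ).re)
    (hJ : 2 * ‖H₁‖ < J) :
    rayleighMin H₁ (S : Set E) - ‖H₁‖ ^ 2 / (J - 2 * ‖H₁‖)
        ≤ rayleighMin (H₁ + H₂) Set.univ ∧
      rayleighMin (H₁ + H₂) Set.univ ≤ rayleighMin H₁ (S : Set E) := by
  obtain ⟨u, huS, hu⟩ := S.exists_mem_norm_eq_one_of_ne_bot hS
  refine ⟨le_rayleighMin ⟨u, Set.mem_univ u, hu⟩ fun v _ hv ↦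
    rayleighMin_sub_le_re_inner_add_apply hH₂.isSymmetric hvanish hJlower hJ hv,
    le_rayleighMin ⟨u, huS, hu⟩ fun v hvS hv ↦ ?_⟩
  calc rayleighMin (H₁ + H₂) Set.univ ≤ (⟪v, (H₁ + H₂) v⟫_ℂ).re :=
        rayleighMin_le _ (Set.mem_univ v) hv
    _ = (⟪v, H₁ v⟫_ℂ).re := by simp [hvanish v hvS]

/-- **Projection lemma.**  If the Hermitian operator `H₂` vanishes on the subspace `S` and is
bounded below by `J > 2‖H₁‖` on `Sᗮ`, then the ground-state energy of `H₁ + H₂` is within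
`‖H₁‖²/(J − 2‖H₁‖)` below `λ(H₁|_S)`, and never exceeds `λ(H₁|_S)`. -/
theorem projection_lemma {E : Type*} [NormedAddCommGroup E] [InnerProductSpace ℂ E]
    [FiniteDimensional ℂ E]
    (H₁ H₂ : E →L[ℂ] E) (hH₁ : IsSelfAdjoint H₁) (hH₂ : IsSelfAdjoint H₂)
    (S : Submodule ℂ E) (hS : S ≠ ⊥)
    (P : E →L[ℂ] E) (hP : ∀ v, P v = (S.orthogonalProjectionOnto v : E))
    (hvanish : ∀ v ∈ S, H₂ v = 0)
    (J : ℝ) (hJlower : ∀ v ∈ Sᗮ, J * ‖v‖ ^ 2 ≤ (⟪v, H₂ v⟫_ℂ).re)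
    (hJ : 2 * ‖H₁‖ < J) :
    rayleighMin H₁ (S : Set E) - ‖H₁‖ ^ 2 / (J - 2 * ‖H₁‖)
        ≤ rayleighMin (H₁ + H₂) Set.univ ∧
      rayleighMin (H₁ + H₂) Set.univ ≤ rayleighMin H₁ (S : Set E) :=
  projection_lemma_general H₁ H₂ hH₂ S hS hvanish J hJlower hJ
end

section
/- Fannes continuity of the von Neumann entropy: Let ρ and σ be density matrices on ℂ^D (D ≥ 2), and let T := ‖ρ − σ‖₁ be the trace distance, i.e., the sum of the absolute values of the eigenvalues of the Hermitian matrix ρ − σ. If T ≤ 1/e, then |S₁(ρ) − S₁(σ)| ≤ T·log D − T·log T. -/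
open scoped ComplexOrder
open Matrix

/-- Renyi entropy `S_α` (with `S₁` the von Neumann entropy), via eigenvalues. -/
noncomputable def renyiEntropy {I : Type*} [Fintype I] [DecidableEq I] (α : ℝ)
    (ρ : Matrix I I ℂ) : ℝ :=
  if h : ρ.IsHermitian then
    if α = 1 then ∑ i, -(h.eigenvalues i * Real.log (h.eigenvalues i))
    else (1 - α)⁻¹ * Real.log (∑ i, h.eigenvalues i ^ α)
  else 0

/-- A density matrix: positive semidefinite with trace one. -/
def IsDensityMatrix {I : Type*} [Fintype I] (ρ : Matrix I I ℂ) : Prop :=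
  ρ.PosSemidef ∧ ρ.trace = 1

/-- The trace norm of a Hermitian matrix: the sum of the absolute values of its
eigenvalues. -/
noncomputable def traceNorm {I : Type*} [Fintype I] [DecidableEq I]
    (M : Matrix I I ℂ) : ℝ :=
  if h : M.IsHermitian then ∑ i, |h.eigenvalues i| else 0

/-!
Let `a₁ ≥ ⋯ ≥ a_D` and `b₁ ≥ ⋯ ≥ b_D` be the eigenvalues of `ρ` and `σ`. The matrix
`σ + (ρ - σ)₊` dominates both `ρ` and `σ` in the Loewner order, so by Weyl's monotonicity its
sorted eigenvalues dominate theirs; comparing traces gives Mirsky's inequality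
`∑ₖ |aₖ - bₖ| ≤ ‖ρ - σ‖₁ = T`. For `η x = -x log x`, concavity gives
`|η aₖ - η bₖ| ≤ η |aₖ - bₖ|` as long as `|aₖ - bₖ| ≤ 1/e`, and Jensen's inequality gives
`∑ₖ η εₖ ≤ E log D + η E` for `E = ∑ₖ εₖ`. Since `η` increases on `[0, 1/e]` and `E ≤ T`,
the right-hand side is at most `T log D + η T`.
-/

open Set

theorem ConcaveOn.map_add_sub_map_le_of_le {f : ℝ → ℝ} {s : Set ℝ} (hf : ConcaveOn ℝ s f)
    {x z t : ℝ} (hx : x ∈ s) (hzt : z + t ∈ s) (hxz : x ≤ z) (ht : 0 ≤ t) :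
    f (z + t) - f z ≤ f (x + t) - f x := by
  rcases (hxz.trans (le_add_of_nonneg_right ht)).eq_or_lt with hxzt | hxzt
  · obtain rfl : t = 0 := by linarith
    obtain rfl : x = z := by linarith
    rfl
  -- `z` and `x + t` are the convex combinations of `x` and `z + t` with swapped weights
  set a := t / (z + t - x) with ha_def
  have ha : 0 ≤ a := div_nonneg ht (by linarith)
  have ha1 : 0 ≤ 1 - a := by
    rw [ha_def, sub_nonneg, div_le_one (by linarith)]
    linarith
  have hz := hf.2 hx hzt ha ha1 (by ring)
  have hxt := hf.2 hx hzt ha1 ha (by ring)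
  have ez : a * x + (1 - a) * (z + t) = z := by
    rw [ha_def]; field_simp; ring
  have ext : (1 - a) * x + a * (z + t) = x + t := by
    rw [ha_def]; field_simp; ring
  simp only [smul_eq_mul, ez, ext] at hz hxt
  linarith

namespace Real

theorem self_le_negMulLog {x : ℝ} (hx : 0 ≤ x) (hxe : x ≤ exp (-1)) : x ≤ negMulLog x := by
  rcases hx.eq_or_lt with rfl | hx
  · simp
  have hlog : log x ≤ -1 := by simpa using log_le_log hx hxe
  rw [negMulLog]
  nlinarith

theorem monotoneOn_negMulLog : MonotoneOn negMulLog (Icc 0 (exp (-1))) := by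
  refine monotoneOn_of_deriv_nonneg (convex_Icc _ _) continuous_negMulLog.continuousOn
    (differentiableOn_negMulLog.mono ?_) fun x hx ↦ ?_ <;> rw [interior_Icc] at *
  · exact fun x hx ↦ hx.1.ne'
  · have hlog : log x < -1 := by simpa using log_lt_log hx.1 hx.2
    rw [deriv_negMulLog hx.1.ne']
    linarith

theorem abs_negMulLog_sub_negMulLog_le {x y : ℝ} (hx : x ∈ Icc 0 1) (hy : y ∈ Icc 0 1)
    (hxy : |x - y| ≤ exp (-1)) : |negMulLog x - negMulLog y| ≤ negMulLog |x - y| := by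
  wlog hle : x ≤ y generalizing x y
  · rw [abs_sub_comm, abs_sub_comm x]
    exact this hy hx (by rwa [abs_sub_comm]) (le_of_not_ge hle)
  rw [abs_sub_comm x y, abs_of_nonneg (sub_nonneg.2 hle)] at hxy ⊢
  set t := y - x
  have ht : 0 ≤ t := sub_nonneg.2 hle
  have hy' : y = x + t := by ring
  have hup : negMulLog y - negMulLog x ≤ negMulLog t := by
    simpa [hy'] using concaveOn_negMulLog.map_add_sub_map_le_of_le (x := 0) (z := x) (t := t)
      self_mem_Ici (by simpa [← hy'] using hy.1) hx.1 ht
  have hdown : negMulLog x - negMulLog y ≤ negMulLog (1 - t) := by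
    have := concaveOn_negMulLog.map_add_sub_map_le_of_le (x := x) (z := 1 - t) (t := t)
      hx.1 (by simp) (by linarith [hy.2]) ht
    simp only [sub_add_cancel, negMulLog_one, ← hy'] at this
    linarith
  have h1t : negMulLog (1 - t) ≤ t := by
    simpa using negMulLog_le_one_sub_self (x := 1 - t) (by linarith [hy.2, hx.1])
  rw [abs_le]
  constructor <;> linarith [self_le_negMulLog ht hxy]

theorem sum_negMulLog_le {ι : Type*} (s : Finset ι) {w : ι → ℝ} (hw : ∀ i ∈ s, 0 ≤ w i) :
    ∑ i ∈ s, negMulLog (w i)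
      ≤ (∑ i ∈ s, w i) * log s.card + negMulLog (∑ i ∈ s, w i) := by
  rcases s.eq_empty_or_nonempty with rfl | hs
  · simp
  have hn : (0 : ℝ) < s.card := by exact_mod_cast hs.card_pos
  have jensen := concaveOn_negMulLog.le_map_sum (t := s) (w := fun _ ↦ (s.card : ℝ)⁻¹)
    (fun _ _ ↦ by positivity) (by simp [hn.ne']) hw
  rw [← Finset.smul_sum, ← Finset.smul_sum, smul_eq_mul, smul_eq_mul, negMulLog_mul] at jensen
  have hinv : negMulLog (s.card : ℝ)⁻¹ = (s.card : ℝ)⁻¹ * log s.card := by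
    simp [negMulLog, log_inv]
  refine le_of_mul_le_mul_left (jensen.trans_eq ?_) (inv_pos.2 hn)
  rw [hinv]
  ring

end Real

open Module Submodule

namespace OrthonormalBasis

variable {ι 𝕜 E : Type*} [RCLike 𝕜] [NormedAddCommGroup E] [InnerProductSpace 𝕜 E] [Fintype ι]

theorem repr_eq_zero_of_mem_span (b : OrthonormalBasis ι 𝕜 E) {s : Set ι} {x : E}
    (hx : x ∈ span 𝕜 (b '' s)) {j : ι} (hj : j ∉ s) : b.repr x j = 0 := by
  have hle : span 𝕜 (b '' s) ≤ (𝕜 ∙ b j)ᗮ := by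
    rw [span_le]
    rintro _ ⟨i, hi, rfl⟩
    exact mem_orthogonal_singleton_iff_inner_right.2
      (b.orthonormal.2 fun hji ↦ hj (hji ▸ hi))
  rw [b.repr_apply_apply]
  exact mem_orthogonal_singleton_iff_inner_right.1 (hle hx)

theorem finrank_span_image (b : OrthonormalBasis ι 𝕜 E) (s : Finset ι) :
    finrank 𝕜 (span 𝕜 (b '' s)) = s.card := by
  have hli : LinearIndependent 𝕜 fun i : (s : Set ι) ↦ b i :=
    b.orthonormal.linearIndependent.comp _ Subtype.val_injective
  rw [image_eq_range, finrank_span_eq_card hli]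
  simp

end OrthonormalBasis

namespace LinearMap.IsSymmetric

variable {𝕜 E : Type*} [RCLike 𝕜] [NormedAddCommGroup E] [InnerProductSpace 𝕜 E]
  [FiniteDimensional 𝕜 E] {T : E →ₗ[𝕜] E} {n : ℕ} (hn : finrank 𝕜 E = n)

open RCLike

section

variable (hT : T.IsSymmetric)

theorem re_inner_apply_self_sub_mul_norm_sq (c : ℝ) (x : E) :
    re (inner 𝕜 x (T x)) - c * ‖x‖ ^ 2
      = ∑ i, (hT.eigenvalues hn i - c) * ‖(hT.eigenvectorBasis hn).repr x i‖ ^ 2 := by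
  set b := hT.eigenvectorBasis hn
  rw [← b.repr.inner_map_map, ← b.repr.norm_map, EuclideanSpace.norm_sq_eq, PiLp.inner_apply,
    map_sum, Finset.mul_sum, ← Finset.sum_sub_distrib]
  refine Finset.sum_congr rfl fun i _ ↦ ?_
  rw [hT.eigenvectorBasis_apply_self_apply, inner_apply, mul_assoc, mul_conj, ← ofReal_pow,
    ← ofReal_mul, ofReal_re, sub_mul]

theorem mul_norm_sq_le_re_inner_apply_self {s : Set (Fin n)} {c : ℝ}
    (hc : ∀ i ∈ s, c ≤ hT.eigenvalues hn i) {x : E}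
    (hx : x ∈ span 𝕜 (hT.eigenvectorBasis hn '' s)) : c * ‖x‖ ^ 2 ≤ re (inner 𝕜 x (T x)) := by
  rw [← sub_nonneg, hT.re_inner_apply_self_sub_mul_norm_sq hn]
  refine Finset.sum_nonneg fun i _ ↦ ?_
  by_cases hi : i ∈ s
  · exact mul_nonneg (sub_nonneg.2 (hc i hi)) (sq_nonneg _)
  · simp [(hT.eigenvectorBasis hn).repr_eq_zero_of_mem_span hx hi]

theorem re_inner_apply_self_le_mul_norm_sq {s : Set (Fin n)} {c : ℝ}
    (hc : ∀ i ∈ s, hT.eigenvalues hn i ≤ c) {x : E}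
    (hx : x ∈ span 𝕜 (hT.eigenvectorBasis hn '' s)) : re (inner 𝕜 x (T x)) ≤ c * ‖x‖ ^ 2 := by
  rw [← sub_nonpos, hT.re_inner_apply_self_sub_mul_norm_sq hn]
  refine Finset.sum_nonpos fun i _ ↦ ?_
  by_cases hi : i ∈ s
  · exact mul_nonpos_of_nonpos_of_nonneg (sub_nonpos.2 (hc i hi)) (sq_nonneg _)
  · simp [(hT.eigenvectorBasis hn).repr_eq_zero_of_mem_span hx hi]

end

theorem eigenvalues_le_eigenvalues_of_le {S : E →ₗ[𝕜] E} (hS : S.IsSymmetric)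
    (hT : T.IsSymmetric) (hST : S ≤ T) (k : Fin n) :
    hS.eigenvalues hn k ≤ hT.eigenvalues hn k := by
  set V := span 𝕜 (hS.eigenvectorBasis hn '' (Finset.Iic k : Set (Fin n)))
  set U := span 𝕜 (hT.eigenvectorBasis hn '' (Finset.Ici k : Set (Fin n)))
  -- `dim V + dim U = (k + 1) + (n - k) > n`
  obtain ⟨x, hxV, hxU, hx⟩ : ∃ x ∈ V, x ∈ U ∧ x ≠ 0 := by
    have hVU : ¬ Disjoint V U := fun h ↦ by
      have := finrank_add_finrank_le_of_disjoint h
      rw [OrthonormalBasis.finrank_span_image, OrthonormalBasis.finrank_span_image, hn,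
        Fin.card_Iic, Fin.card_Ici] at this
      omega
    simpa [disjoint_def] using hVU
  have hSx := hS.mul_norm_sq_le_re_inner_apply_self hn
    (fun i hi ↦ hS.eigenvalues_antitone hn (Finset.mem_Iic.1 hi)) hxV
  have hTx := hT.re_inner_apply_self_le_mul_norm_sq hn
    (fun i hi ↦ hT.eigenvalues_antitone hn (Finset.mem_Ici.1 hi)) hxU
  have hSTx : re (inner 𝕜 x (S x)) ≤ re (inner 𝕜 x (T x)) := by
    simpa [inner_sub_right] using hST.re_inner_nonneg_right x
  exact le_of_mul_le_mul_right (hSx.trans (hSTx.trans hTx)) (pow_pos (norm_pos_iff.2 hx) 2)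

end LinearMap.IsSymmetric

namespace Matrix.IsHermitian

variable {𝕜 n : Type*} [RCLike 𝕜] [Fintype n] [DecidableEq n] {A B : Matrix n n 𝕜}

theorem sum_comp_eigenvalues₀ {M : Type*} [AddCommMonoid M] (hA : A.IsHermitian) (f : ℝ → M) :
    ∑ k, f (hA.eigenvalues₀ k) = ∑ i, f (hA.eigenvalues i) :=
  (Equiv.sum_comp (Fintype.equivOfCardEq (Fintype.card_fin _)).symm _).symm

theorem eigenvalues_equivOfCardEq (hA : A.IsHermitian) (k : Fin (Fintype.card n)) :
    hA.eigenvalues (Fintype.equivOfCardEq (Fintype.card_fin _) k) = hA.eigenvalues₀ k := by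
  simp [eigenvalues]

theorem sum_eigenvalues₀ (hA : A.IsHermitian) : ∑ k, hA.eigenvalues₀ k = RCLike.re A.trace := by
  simpa [hA.trace_eq_sum_eigenvalues] using hA.sum_comp_eigenvalues₀ fun x ↦ x

theorem eigenvalues₀_le_eigenvalues₀ (hA : A.IsHermitian) (hB : B.IsHermitian)
    (hAB : (B - A).PosSemidef) (k : Fin (Fintype.card n)) :
    hA.eigenvalues₀ k ≤ hB.eigenvalues₀ k :=
  LinearMap.IsSymmetric.eigenvalues_le_eigenvalues_of_le _ _ _
    (by rwa [LinearMap.le_def, ← map_sub, isPositive_toEuclideanLin_iff]) k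

theorem trace_cfc (hA : A.IsHermitian) (f : ℝ → ℝ) :
    (cfc f A).trace = ∑ i, (f (hA.eigenvalues i) : 𝕜) := by
  rw [hA.cfc_eq, IsHermitian.cfc, Unitary.conjStarAlgAut_apply, trace_mul_cycle,
    Unitary.coe_star_mul_self, one_mul, trace_diagonal]
  rfl

open scoped MatrixOrder in
theorem sum_abs_eigenvalues₀_sub_le (hA : A.IsHermitian) (hB : B.IsHermitian) :
    ∑ k, |hA.eigenvalues₀ k - hB.eigenvalues₀ k| ≤ ∑ i, |(hA.sub hB).eigenvalues i| := by
  set hC := hA.sub hB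
  set P := cfc (fun x : ℝ ↦ max x 0) (A - B)
  have hP : P.PosSemidef := nonneg_iff_posSemidef.1 (cfc_nonneg fun x _ ↦ le_max_right x 0)
  have hPC : (P - (A - B)).PosSemidef := by
    rw [← cfc_id' ℝ (A - B) hC.isSelfAdjoint, ← cfc_sub _ _ (A - B)]
    exact nonneg_iff_posSemidef.1 (cfc_nonneg fun x _ ↦ sub_nonneg.2 (le_max_left x 0))
  have hM := hB.add hP.isHermitian
  have hAM k : hA.eigenvalues₀ k ≤ hM.eigenvalues₀ k :=
    hA.eigenvalues₀_le_eigenvalues₀ hM (by convert hPC using 1; abel) k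
  have hBM k : hB.eigenvalues₀ k ≤ hM.eigenvalues₀ k :=
    hB.eigenvalues₀_le_eigenvalues₀ hM (by simpa using hP) k
  have hPtr : RCLike.re P.trace = ∑ i, max (hC.eigenvalues i) 0 := by
    simp [P, hC.trace_cfc]
  have hCtr : RCLike.re (A - B).trace = ∑ i, hC.eigenvalues i := by
    simp [hC.trace_eq_sum_eigenvalues]
  calc ∑ k, |hA.eigenvalues₀ k - hB.eigenvalues₀ k|
      ≤ ∑ k, ((hM.eigenvalues₀ k - hA.eigenvalues₀ k)
          + (hM.eigenvalues₀ k - hB.eigenvalues₀ k)) :=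
        Finset.sum_le_sum fun k _ ↦
          abs_le.2 ⟨by linarith [hAM k, hBM k], by linarith [hAM k, hBM k]⟩
    _ = 2 * RCLike.re P.trace - RCLike.re (A - B).trace := by
        simp only [Finset.sum_add_distrib, Finset.sum_sub_distrib, sum_eigenvalues₀, trace_add,
          trace_sub, map_add, map_sub]
        ring
    _ = ∑ i, |hC.eigenvalues i| := by
        rw [hPtr, hCtr, Finset.mul_sum, ← Finset.sum_sub_distrib]
        refine Finset.sum_congr rfl fun i _ ↦ ?_
        rcases le_total (hC.eigenvalues i) 0 with h | h
        · rw [abs_of_nonpos h, max_eq_right h]; ring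
        · rw [abs_of_nonneg h, max_eq_left h]; ring

end Matrix.IsHermitian

namespace IsDensityMatrix

variable {I : Type*} [Fintype I] [DecidableEq I] {ρ : Matrix I I ℂ}

theorem eigenvalues₀_mem_Icc (hρ : IsDensityMatrix ρ) (k : Fin (Fintype.card I)) :
    hρ.1.isHermitian.eigenvalues₀ k ∈ Icc 0 1 := by
  have hnonneg j : 0 ≤ hρ.1.isHermitian.eigenvalues₀ j := by
    rw [← IsHermitian.eigenvalues_equivOfCardEq]
    exact hρ.1.eigenvalues_nonneg _
  refine ⟨hnonneg k, ?_⟩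
  calc hρ.1.isHermitian.eigenvalues₀ k
      ≤ ∑ j, hρ.1.isHermitian.eigenvalues₀ j :=
        Finset.single_le_sum (fun j _ ↦ hnonneg j) (Finset.mem_univ k)
    _ = 1 := by simp [IsHermitian.sum_eigenvalues₀, hρ.2]

end IsDensityMatrix

open Real

theorem renyiEntropy_one_eq_sum_negMulLog {I : Type*} [Fintype I] [DecidableEq I]
    {ρ : Matrix I I ℂ} (hρ : ρ.IsHermitian) :
    renyiEntropy 1 ρ = ∑ k, negMulLog (hρ.eigenvalues₀ k) := by
  rw [renyiEntropy, dif_pos hρ, if_pos rfl, hρ.sum_comp_eigenvalues₀]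
  simp [negMulLog]

theorem fannes_inequality_general {D : ℕ}
    (ρ σ : Matrix (Fin D) (Fin D) ℂ)
    (hρ : IsDensityMatrix ρ) (hσ : IsDensityMatrix σ)
    (hT : traceNorm (ρ - σ) ≤ (Real.exp 1)⁻¹) :
    |renyiEntropy 1 ρ - renyiEntropy 1 σ|
      ≤ traceNorm (ρ - σ) * Real.log D
          - traceNorm (ρ - σ) * Real.log (traceNorm (ρ - σ)) := by
  have hρH := hρ.1.isHermitian
  have hσH := hσ.1.isHermitian
  set T := traceNorm (ρ - σ)
  set a := hρH.eigenvalues₀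
  set b := hσH.eigenvalues₀
  have hmirsky : ∑ k, |a k - b k| ≤ T := by
    simpa only [T, traceNorm, dif_pos (hρH.sub hσH)] using hρH.sum_abs_eigenvalues₀_sub_le hσH
  have hTe : T ≤ exp (-1) := by rwa [exp_neg]
  have hsum : 0 ≤ ∑ k, |a k - b k| := Finset.sum_nonneg fun k _ ↦ abs_nonneg (a k - b k)
  have hdist k : |a k - b k| ≤ exp (-1) :=
    (Finset.single_le_sum (fun j _ ↦ abs_nonneg (a j - b j)) (Finset.mem_univ k)).trans
      (hmirsky.trans hTe)
  rw [renyiEntropy_one_eq_sum_negMulLog hρH, renyiEntropy_one_eq_sum_negMulLog hσH,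
    ← Finset.sum_sub_distrib]
  calc |∑ k, (negMulLog (a k) - negMulLog (b k))|
      ≤ ∑ k, |negMulLog (a k) - negMulLog (b k)| := Finset.abs_sum_le_sum_abs _ _
    _ ≤ ∑ k, negMulLog |a k - b k| := Finset.sum_le_sum fun k _ ↦
        abs_negMulLog_sub_negMulLog_le (hρ.eigenvalues₀_mem_Icc k) (hσ.eigenvalues₀_mem_Icc k)
          (hdist k)
    _ ≤ (∑ k, |a k - b k|) * log D + negMulLog (∑ k, |a k - b k|) := by
        simpa using sum_negMulLog_le Finset.univ fun k _ ↦ abs_nonneg (a k - b k)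
    _ ≤ T * log D + negMulLog T :=
        add_le_add (mul_le_mul_of_nonneg_right hmirsky (log_natCast_nonneg D))
          (monotoneOn_negMulLog ⟨hsum, hmirsky.trans hTe⟩ ⟨hsum.trans hmirsky, hTe⟩ hmirsky)
    _ = T * log D - T * log T := by rw [negMulLog]; ring

/-- **Fannes continuity of the von Neumann entropy**: if `T = ‖ρ − σ‖₁ ≤ 1/e` then
`|S₁(ρ) − S₁(σ)| ≤ T·log D − T·log T`. -/
theorem fannes_inequality {D : ℕ} (hD : 2 ≤ D)
    (ρ σ : Matrix (Fin D) (Fin D) ℂ)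
    (hρ : IsDensityMatrix ρ) (hσ : IsDensityMatrix σ)
    (hT : traceNorm (ρ - σ) ≤ (Real.exp 1)⁻¹) :
    |renyiEntropy 1 ρ - renyiEntropy 1 σ|
      ≤ traceNorm (ρ - σ) * Real.log D
          - traceNorm (ρ - σ) * Real.log (traceNorm (ρ - σ)) :=
  fannes_inequality_general ρ σ hρ hσ hT
end
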